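/- A collection of subcubes of 𝔹^n is the collection of principal trapspaces of some Boolean network of dimension n if and only if it is pre-principal. Moreover, for every pre-principal collection 𝒬 of subcubes of 𝔹^n, F(𝒬) is a trapping network with PT(F(𝒬)) = 𝒬, and for every trapping Boolean network g of dimension n, F(PT(g)) = g. -/

import Mathlib

/-!  Common definitions: Boolean networks on `Fin n → Bool`. -/

/-- The update `f^{(S)}` of the coordinates in `S` according to `f`. -/
def upd {n : ℕ} (f : (Fin n → Bool) → Fin n → Bool) (S : Finset (Fin n)) :
    (Fin n → Bool) → Fin n → Bool :=
  fun x i => if i ∈ S then f x i else x i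

/-- `f^{(S,T)} = f^{(T)} ∘ f^{(S)}`. -/
def upd2 {n : ℕ} (f : (Fin n → Bool) → Fin n → Bool) (S T : Finset (Fin n)) :
    (Fin n → Bool) → Fin n → Bool :=
  upd f T ∘ upd f S

/-- `Δ(x,y)`, the set of coordinates where `x` and `y` differ. -/
def delta {n : ℕ} (x y : Fin n → Bool) : Set (Fin n) := {i | x i ≠ y i}

/-- Hamming distance. -/
noncomputable def hdist {n : ℕ} (x y : Fin n → Bool) : ℕ := (delta x y).ncard

/-- The interval (subcube) `[x,y]`. -/
def interval {n : ℕ} (x y : Fin n → Bool) : Set (Fin n → Bool) :=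
  {z | delta x z ⊆ delta x y}

/-- A subcube of `𝔹^n`: fix the coordinates in `S` to `0` and those in `T` to `1`. -/
def IsSubcube {n : ℕ} (X : Set (Fin n → Bool)) : Prop :=
  ∃ S T : Set (Fin n), Disjoint S T ∧
    X = {x | (∀ i ∈ S, x i = false) ∧ (∀ i ∈ T, x i = true)}

/-- The partial order `f ⊑ g` on Boolean networks. -/
def BNle {n : ℕ} (f g : (Fin n → Bool) → Fin n → Bool) : Prop :=
  ∀ x, delta x (f x) ⊆ delta x (g x)

/-- A trapspace of `f`: an invariant subcube. -/
def IsTrapspace {n : ℕ} (f : (Fin n → Bool) → Fin n → Bool)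
    (X : Set (Fin n → Bool)) : Prop :=
  IsSubcube X ∧ ∀ x ∈ X, f x ∈ X

/-- The collection of all trapspaces of `f`. -/
def trapspaces {n : ℕ} (f : (Fin n → Bool) → Fin n → Bool) :
    Set (Set (Fin n → Bool)) :=
  {X | IsTrapspace f X}

/-- The principal trapspace `T_f(x)`: the smallest trapspace of `f` containing `x`. -/
def Tprin {n : ℕ} (f : (Fin n → Bool) → Fin n → Bool) (x : Fin n → Bool) :
    Set (Fin n → Bool) :=
  ⋂₀ {X | IsTrapspace f X ∧ x ∈ X}

/-- The collection of principal trapspaces of `f`. -/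
def PT {n : ℕ} (f : (Fin n → Bool) → Fin n → Bool) : Set (Set (Fin n → Bool)) :=
  {X | ∃ x, X = Tprin f x}

-- The opposite of `x` in a subcube `X` containing `x`: the coordinate `i` is flipped
-- iff some element of `X` differs from `x` there; so `[x, opp X x] = X` when `X` is a
-- subcube containing `x`.
open scoped Classical in
noncomputable def opp {n : ℕ} (X : Set (Fin n → Bool)) (x : Fin n → Bool) :
    Fin n → Bool :=
  fun i => if ∃ y ∈ X, y i ≠ x i then !(x i) else x i

/-- The trapping closure `f^T`, characterised by `[x, f^T(x)] = T_f(x)`. -/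
noncomputable def trapClosure {n : ℕ} (f : (Fin n → Bool) → Fin n → Bool) :
    (Fin n → Bool) → Fin n → Bool :=
  fun x => opp (Tprin f x) x

/-- The general asynchronous graph of `f`, as a relation on `𝔹^n`. -/
def GA {n : ℕ} (f : (Fin n → Bool) → Fin n → Bool) :
    (Fin n → Bool) → (Fin n → Bool) → Prop :=
  fun x y => ∃ S : Finset (Fin n), y = upd f S x

/-- The asynchronous graph of `f`, as a relation on `𝔹^n`. -/
def Agraph {n : ℕ} (f : (Fin n → Bool) → Fin n → Bool) :
    (Fin n → Bool) → (Fin n → Bool) → Prop :=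
  fun x y => ∃ i : Fin n, y = upd f {i} x

/-- The trapping graph of `f`: an edge `(x,y)` iff `y ∈ T_f(x)`. -/
def TG {n : ℕ} (f : (Fin n → Bool) → Fin n → Bool) :
    (Fin n → Bool) → (Fin n → Bool) → Prop :=
  fun x y => y ∈ Tprin f x

/-- A network is trapping if its general asynchronous graph is transitive. -/
def IsTrapping {n : ℕ} (f : (Fin n → Bool) → Fin n → Bool) : Prop :=
  Transitive (GA f)

/-- A commutative Boolean network: `f^{(i,j)} = f^{(j,i)}` for all `i,j`. -/
def IsCommutative' {n : ℕ} (f : (Fin n → Bool) → Fin n → Bool) : Prop :=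
  ∀ i j : Fin n, upd2 f {i} {j} = upd2 f {j} {i}

/-- `𝒜(x)`: the intersection of all members of `𝒜` containing `x`
(`= 𝔹^n` if no member contains `x`, since `⋂₀ ∅ = univ`). -/
def collAt {n : ℕ} (𝒜 : Set (Set (Fin n → Bool))) (x : Fin n → Bool) :
    Set (Fin n → Bool) :=
  ⋂₀ {A ∈ 𝒜 | x ∈ A}

/-- The network `F(𝒜)`, characterised by `[x, F(𝒜)(x)] = 𝒜(x)`. -/
noncomputable def Fnet {n : ℕ} (𝒜 : Set (Set (Fin n → Bool))) :
    (Fin n → Bool) → Fin n → Bool :=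
  fun x => opp (collAt 𝒜 x) x

/-- A collection of subcubes is pre-principal if `𝒬 = {𝒬(x) : x ∈ 𝔹^n}`. -/
def PrePrincipal {n : ℕ} (𝒬 : Set (Set (Fin n → Bool))) : Prop :=
  𝒬 = {X | ∃ x, X = collAt 𝒬 x}

/-- `λ(𝒜)`: unions of subcollections of `𝒜` that are subcubes. -/
def lamColl {n : ℕ} (𝒜 : Set (Set (Fin n → Bool))) : Set (Set (Fin n → Bool)) :=
  {X | ∃ ℛ ⊆ 𝒜, X = ⋃₀ ℛ ∧ IsSubcube X}

/-- `μ(𝒜) = {𝒜(x) : x ∈ 𝔹^n}`. -/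
def muColl {n : ℕ} (𝒜 : Set (Set (Fin n → Bool))) : Set (Set (Fin n → Bool)) :=
  {X | ∃ x, X = collAt 𝒜 x}

/-- A pre-ideal collection of subcubes. -/
def PreIdeal {n : ℕ} (𝒥 : Set (Set (Fin n → Bool))) : Prop :=
  Set.univ ∈ 𝒥 ∧
  (∀ A ∈ 𝒥, ∀ B ∈ 𝒥, (A ∩ B).Nonempty → A ∩ B ∈ 𝒥) ∧
  (∀ ℛ ⊆ 𝒥, IsSubcube (⋃₀ ℛ) → ⋃₀ ℛ ∈ 𝒥)

/-- The collection of minimal trapspaces of `f`. -/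
def MT {n : ℕ} (f : (Fin n → Bool) → Fin n → Bool) : Set (Set (Fin n → Bool)) :=
  {X | IsTrapspace f X ∧ ∀ Y, IsTrapspace f Y → ¬ Y ⊂ X}

/-- `M(f)`: the union of the minimal trapspaces of `f`. -/
def Mset {n : ℕ} (f : (Fin n → Bool) → Fin n → Bool) : Set (Fin n → Bool) :=
  ⋃₀ MT f

-- The min-trapping extension `f^M`: `[x, f^M(x)] = T_f(x)` if `x ∈ M(f)`,
-- and `f^M(x) = ¬x` otherwise.
open scoped Classical in
noncomputable def minExt {n : ℕ} (f : (Fin n → Bool) → Fin n → Bool) :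
    (Fin n → Bool) → Fin n → Bool :=
  fun x => if x ∈ Mset f then opp (Tprin f x) x else fun i => !(x i)

/-!
A subcube `X` through `x` is the interval `[x, opp X x]`, and `opp [x, y] x = y`, so a network is
the same thing as a choice of a subcube through every point; `F(𝒜)` chooses `𝒜(x)` at `x`.
For every collection `𝒜`, `y ∈ 𝒜(x)` implies `𝒜(y) ⊆ 𝒜(x)`. When `𝒜` consists of subcubes this
makes the general asynchronous graph of `F(𝒜)` transitive and `𝒜(x)` the principal trapspace of
`F(𝒜)` at `x`, so `PT(F(𝒜)) = {𝒜(x)}`. Conversely `PT(f)(x) = T_f(x)` for every `f`, and for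
trapping `g` the interval `[x, g(x)]` is already a trapspace, so `T_g(x) = [x, g(x)]`.
-/

section

variable {n : ℕ}

lemma left_mem_interval (x y : Fin n → Bool) : x ∈ interval x y :=
  fun _ hi => absurd rfl hi

lemma right_mem_interval (x y : Fin n → Bool) : y ∈ interval x y := fun _ h => h

lemma interval_subset_interval {x y w : Fin n → Bool} (hy : y ∈ interval x w) :
    interval x y ⊆ interval x w :=
  fun _ hz => Set.Subset.trans hz hy

lemma eq_of_delta_eq {x y w : Fin n → Bool} (h : delta x y = delta x w) : y = w := by
  funext i
  have hi := Set.ext_iff.1 h i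
  simp only [delta, Set.mem_ofPred_eq] at hi
  revert hi
  cases x i <;> cases y i <;> cases w i <;> simp

lemma isSubcube_setOf_delta_subset (x : Fin n → Bool) (K : Set (Fin n)) :
    IsSubcube {z | delta x z ⊆ K} := by
  refine ⟨{i | i ∉ K ∧ x i = false}, {i | i ∉ K ∧ x i = true}, ?_, ?_⟩
  · exact Set.disjoint_left.2 fun i h0 h1 => by simp_all
  · ext z
    simp only [delta, Set.subset_def, Set.mem_ofPred_eq, ← forall_and]
    refine forall_congr' fun i => ?_
    by_cases hi : i ∈ K <;> cases x i <;> cases z i <;> simp [hi]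

lemma isSubcube_interval (x y : Fin n → Bool) : IsSubcube (interval x y) :=
  isSubcube_setOf_delta_subset x (delta x y)

lemma IsSubcube.exists_eq_setOf_delta_subset {X : Set (Fin n → Bool)} {x : Fin n → Bool}
    (hX : IsSubcube X) (hx : x ∈ X) : ∃ K, X = {z | delta x z ⊆ K} := by
  obtain ⟨S, T, -, rfl⟩ := hX
  obtain ⟨hxS, hxT⟩ := hx
  refine ⟨(S ∪ T)ᶜ, ?_⟩
  ext z
  simp only [Set.mem_ofPred_eq, delta, Set.subset_def, Set.mem_compl_iff, Set.mem_union]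
  constructor
  · rintro ⟨hzS, hzT⟩ i hne (hi | hi)
    · exact hne ((hxS i hi).trans (hzS i hi).symm)
    · exact hne ((hxT i hi).trans (hzT i hi).symm)
  · intro h
    have hzx : ∀ i, i ∈ S ∨ i ∈ T → z i = x i :=
      fun i hi => by_contra fun hne => h i (Ne.symm hne) hi
    exact ⟨fun i hi => (hzx i (.inl hi)).trans (hxS i hi),
      fun i hi => (hzx i (.inr hi)).trans (hxT i hi)⟩

lemma delta_opp (X : Set (Fin n → Bool)) (x : Fin n → Bool) :
    delta x (opp X x) = ⋃ y ∈ X, delta x y := by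
  ext i
  simp only [delta, opp, Set.mem_ofPred_eq, Set.mem_iUnion, exists_prop, ne_comm (a := x i)]
  split_ifs with h <;> simp [h]

lemma IsSubcube.interval_opp {X : Set (Fin n → Bool)} {x : Fin n → Bool}
    (hX : IsSubcube X) (hx : x ∈ X) : interval x (opp X x) = X := by
  obtain ⟨K, rfl⟩ := hX.exists_eq_setOf_delta_subset hx
  ext z
  refine ⟨fun hz => Set.Subset.trans hz ?_, fun hz => ?_⟩
  · rw [delta_opp]
    exact Set.iUnion₂_subset fun y hy => hy
  · change delta x z ⊆ _
    rw [delta_opp]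
    exact Set.subset_biUnion_of_mem (u := delta x) hz

lemma opp_interval (x y : Fin n → Bool) : opp (interval x y) x = y := by
  refine eq_of_delta_eq (x := x) ?_
  rw [delta_opp]
  exact Set.Subset.antisymm (Set.iUnion₂_subset fun z hz => hz)
    (Set.subset_biUnion_of_mem (u := delta x) (right_mem_interval x y))

lemma IsSubcube.interval_subset {X : Set (Fin n → Bool)} {x y : Fin n → Bool}
    (hX : IsSubcube X) (hx : x ∈ X) (hy : y ∈ X) : interval x y ⊆ X := by
  rw [← hX.interval_opp hx] at hy ⊢
  exact interval_subset_interval hy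

lemma isSubcube_sInter {𝒜 : Set (Set (Fin n → Bool))} {x : Fin n → Bool}
    (hs : ∀ A ∈ 𝒜, IsSubcube A) (hx : ∀ A ∈ 𝒜, x ∈ A) : IsSubcube (⋂₀ 𝒜) := by
  convert isSubcube_setOf_delta_subset x (⋂ A ∈ 𝒜, delta x (opp A x))
  ext z
  simp only [Set.mem_sInter, Set.subset_iInter_iff, Set.mem_ofPred_eq]
  exact forall₂_congr fun A hA => (Set.ext_iff.1 ((hs A hA).interval_opp (hx A hA)) z).symm

lemma mem_Tprin_self (f : (Fin n → Bool) → Fin n → Bool) (x : Fin n → Bool) :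
    x ∈ Tprin f x :=
  fun _ hX => hX.2

lemma Tprin_subset {f : (Fin n → Bool) → Fin n → Bool} {X : Set (Fin n → Bool)}
    {x : Fin n → Bool} (hX : IsTrapspace f X) (hx : x ∈ X) : Tprin f x ⊆ X :=
  Set.sInter_subset_of_mem ⟨hX, hx⟩

lemma isTrapspace_Tprin (f : (Fin n → Bool) → Fin n → Bool) (x : Fin n → Bool) :
    IsTrapspace f (Tprin f x) :=
  ⟨isSubcube_sInter (fun _ hX => hX.1.1) (fun _ hX => hX.2),
    fun _ hy X hX => hX.1.2 _ (hy X hX)⟩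

lemma interval_subset_Tprin (f : (Fin n → Bool) → Fin n → Bool) (x : Fin n → Bool) :
    interval x (f x) ⊆ Tprin f x :=
  have hT := isTrapspace_Tprin f x
  hT.1.interval_subset (mem_Tprin_self f x) (hT.2 x (mem_Tprin_self f x))

lemma GA_iff_mem_interval (f : (Fin n → Bool) → Fin n → Bool) (x y : Fin n → Bool) :
    GA f x y ↔ y ∈ interval x (f x) := by
  classical
  constructor
  · rintro ⟨S, rfl⟩ i hi
    by_cases hiS : i ∈ S <;> simp_all [delta, upd]
  · intro hy
    refine ⟨Finset.univ.filter (fun i => x i ≠ y i), funext fun i => ?_⟩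
    by_cases hxy : x i = y i
    · simp [upd, hxy]
    · simp only [upd, Finset.mem_filter, Finset.mem_univ, true_and, if_pos hxy]
      exact (Bool.eq_not_of_ne (Ne.symm hxy)).trans (Bool.eq_not_of_ne (hy hxy).symm).symm

lemma IsTrapping.Tprin_eq_interval {g : (Fin n → Bool) → Fin n → Bool} (hg : IsTrapping g)
    (x : Fin n → Bool) : Tprin g x = interval x (g x) := by
  refine Set.Subset.antisymm (Tprin_subset ⟨isSubcube_interval x (g x), fun y hy => ?_⟩
    (left_mem_interval x (g x))) (interval_subset_Tprin g x)
  rw [← GA_iff_mem_interval] at hy ⊢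
  exact hg hy ((GA_iff_mem_interval g y (g y)).2 (right_mem_interval y (g y)))

lemma mem_collAt_self (𝒜 : Set (Set (Fin n → Bool))) (x : Fin n → Bool) : x ∈ collAt 𝒜 x :=
  fun _ hA => hA.2

lemma collAt_subset_collAt {𝒜 : Set (Set (Fin n → Bool))} {x y : Fin n → Bool}
    (hy : y ∈ collAt 𝒜 x) : collAt 𝒜 y ⊆ collAt 𝒜 x :=
  Set.sInter_subset_sInter fun A hA => ⟨hA.1, hy A hA⟩

lemma isSubcube_collAt {𝒜 : Set (Set (Fin n → Bool))} (h𝒜 : ∀ A ∈ 𝒜, IsSubcube A)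
    (x : Fin n → Bool) : IsSubcube (collAt 𝒜 x) :=
  isSubcube_sInter (fun A hA => h𝒜 A hA.1) (fun _ hA => hA.2)

lemma collAt_PT (f : (Fin n → Bool) → Fin n → Bool) (x : Fin n → Bool) :
    collAt (PT f) x = Tprin f x := by
  refine Set.Subset.antisymm (Set.sInter_subset_of_mem ⟨⟨x, rfl⟩, mem_Tprin_self f x⟩) ?_
  rintro z hz A ⟨⟨y, rfl⟩, hxA⟩
  exact Tprin_subset (isTrapspace_Tprin f y) hxA hz

lemma prePrincipal_PT (f : (Fin n → Bool) → Fin n → Bool) : PrePrincipal (PT f) := by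
  simp only [PrePrincipal, collAt_PT]
  rfl

lemma IsTrapping.Fnet_PT {g : (Fin n → Bool) → Fin n → Bool} (hg : IsTrapping g) :
    Fnet (PT g) = g :=
  funext fun x => by
    rw [Fnet, collAt_PT, hg.Tprin_eq_interval, opp_interval]

section Fnet

variable {𝒜 : Set (Set (Fin n → Bool))} (h𝒜 : ∀ A ∈ 𝒜, IsSubcube A)
include h𝒜

lemma interval_Fnet (x : Fin n → Bool) : interval x (Fnet 𝒜 x) = collAt 𝒜 x :=
  (isSubcube_collAt h𝒜 x).interval_opp (mem_collAt_self 𝒜 x)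

lemma isTrapping_Fnet : IsTrapping (Fnet 𝒜) := by
  intro x y z hxy hyz
  rw [GA_iff_mem_interval, interval_Fnet h𝒜] at *
  exact collAt_subset_collAt hxy hyz

lemma isTrapspace_collAt (x : Fin n → Bool) : IsTrapspace (Fnet 𝒜) (collAt 𝒜 x) := by
  refine ⟨isSubcube_collAt h𝒜 x, fun y hy => collAt_subset_collAt hy ?_⟩
  rw [← interval_Fnet h𝒜]
  exact right_mem_interval y (Fnet 𝒜 y)

lemma Tprin_Fnet (x : Fin n → Bool) : Tprin (Fnet 𝒜) x = collAt 𝒜 x :=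
  Set.Subset.antisymm (Tprin_subset (isTrapspace_collAt h𝒜 x) (mem_collAt_self 𝒜 x))
    (interval_Fnet h𝒜 x ▸ interval_subset_Tprin (Fnet 𝒜) x)

lemma PT_Fnet : PT (Fnet 𝒜) = {X | ∃ x, X = collAt 𝒜 x} := by
  simp only [PT, Tprin_Fnet h𝒜]

end Fnet

end

/-- the collections of principal trapspaces are exactly the
pre-principal collections of subcubes; `F` and `PT` are mutually inverse between
pre-principal collections and trapping networks. -/
theorem stmt5 (n : ℕ) (𝒬 : Set (Set (Fin n → Bool))) (h𝒬 : ∀ A ∈ 𝒬, IsSubcube A) :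
    ((∃ f : (Fin n → Bool) → Fin n → Bool, PT f = 𝒬) ↔ PrePrincipal 𝒬) ∧
    (PrePrincipal 𝒬 → IsTrapping (Fnet 𝒬) ∧ PT (Fnet 𝒬) = 𝒬) ∧
    (∀ g : (Fin n → Bool) → Fin n → Bool, IsTrapping g → Fnet (PT g) = g) := by
  have PT_Fnet_of_prePrincipal (hpp : PrePrincipal 𝒬) : PT (Fnet 𝒬) = 𝒬 :=
    (PT_Fnet h𝒬).trans hpp.symm
  refine ⟨⟨?_, fun hpp => ⟨Fnet 𝒬, PT_Fnet_of_prePrincipal hpp⟩⟩,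
    fun hpp => ⟨isTrapping_Fnet h𝒬, PT_Fnet_of_prePrincipal hpp⟩, fun g hg => hg.Fnet_PT⟩
  rintro ⟨f, rfl⟩
  exact prePrincipal_PT f
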